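/- arXiv:1606.04156 — 7 statements merged into one kernel-verified Lean document; each statement's English description precedes it below -/
import Mathlib

section
/- Let (W^(0), W^(1), W^(2), …) be a sequence of F-modal matrices and define the products P(k) = W^(k)·W^(k−1)···W^(1)·W^(0). Then for every block-row index i with 1 ≤ i ≤ τ and every k ≥ i, the i-th block row of P(k) equals the 0-th (top) block row of P(k−i); that is, the block P(k)_{ij} equals P(k−i)_{0j} for every j with 0 ≤ j ≤ τ. -/
/-- An `F`-modal matrix `W` of block size `(τ+1) × (τ+1)` with `n × n` blocks
(the inner index type is `ι`): every block `W_{0r}` of the top block row is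
nonnegative, the top block row sums to `F`, the diagonal of `W_{00}` coincides
with the diagonal of `F`, and for `i ≥ 1` the `i`-th block row is
`W_{i,i-1} = I`, `W_{ij} = 0` otherwise. -/
def IsModal {ι : Type*} [Fintype ι] [DecidableEq ι] {τ : ℕ}
    (F : Matrix ι ι ℝ)
    (W : Matrix (Fin (τ + 1) × ι) (Fin (τ + 1) × ι) ℝ) : Prop :=
  (∀ (r : Fin (τ + 1)) (a b : ι), 0 ≤ W (0, a) (r, b)) ∧
  (∀ a b : ι, ∑ r : Fin (τ + 1), W (0, a) (r, b) = F a b) ∧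
  (∀ a : ι, W (0, a) (0, a) = F a a) ∧
  (∀ i : Fin (τ + 1), i ≠ 0 → ∀ (j : Fin (τ + 1)) (a b : ι),
    W (i, a) (j, b) = if (j : ℕ) = (i : ℕ) - 1 ∧ a = b then 1 else 0)

lemma modal_mul_row {n τ : ℕ} {F : Matrix (Fin n) (Fin n) ℝ}
    {W M : Matrix (Fin (τ + 1) × Fin n) (Fin (τ + 1) × Fin n) ℝ}
    (hW : IsModal F W) (i : Fin (τ + 1)) (hi : i ≠ 0)
    (j : Fin (τ + 1)) (a b : Fin n) :
    (W * M) (i, a) (j, b)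
      = M (⟨(i : ℕ) - 1, lt_of_le_of_lt (Nat.sub_le _ _) i.isLt⟩, a) (j, b) := by
  rw [Matrix.mul_apply, Fintype.sum_prod_type]
  rw [Finset.sum_eq_single (⟨(i : ℕ) - 1, lt_of_le_of_lt (Nat.sub_le _ _) i.isLt⟩ :
      Fin (τ + 1))]
  · rw [Finset.sum_eq_single a]
    · rw [hW.2.2.2 i hi]
      simp
    · intro c _ hc
      rw [hW.2.2.2 i hi]
      simp [Ne.symm hc]
    · simp
  · intro r _ hr
    apply Finset.sum_eq_zero
    intro c _
    rw [hW.2.2.2 i hi]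
    have : (r : ℕ) ≠ (i : ℕ) - 1 := by
      intro h
      exact hr (Fin.ext h)
    simp [this]
  · simp

/-- for products `P(k) = W^(k) ⋯ W^(0)` of F-modal matrices, for
every block-row index `i` with `1 ≤ i ≤ τ` and every `k ≥ i`, the `i`-th block
row of `P(k)` equals the top block row of `P(k - i)`. -/
theorem modal_product_block_row_shift {n τ : ℕ}
    (F : Matrix (Fin n) (Fin n) ℝ)
    (W : ℕ → Matrix (Fin (τ + 1) × Fin n) (Fin (τ + 1) × Fin n) ℝ)
    (hW : ∀ k, IsModal F (W k))
    (P : ℕ → Matrix (Fin (τ + 1) × Fin n) (Fin (τ + 1) × Fin n) ℝ)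
    (hP0 : P 0 = W 0)
    (hPsucc : ∀ k, P (k + 1) = W (k + 1) * P k)
    (i : Fin (τ + 1)) (hi : 1 ≤ (i : ℕ))
    (k : ℕ) (hk : (i : ℕ) ≤ k)
    (j : Fin (τ + 1)) (a b : Fin n) :
    P k (i, a) (j, b) = P (k - (i : ℕ)) (0, a) (j, b) := by
  suffices h : ∀ m : ℕ, 1 ≤ m → ∀ i : Fin (τ + 1), (i : ℕ) = m →
      ∀ k : ℕ, m ≤ k → P k (i, a) (j, b) = P (k - m) (0, a) (j, b) by
    exact h (i : ℕ) hi i rfl k hk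
  intro m
  induction m with
  | zero => omega
  | succ m ih =>
    intro _ i him k hk
    obtain ⟨k', rfl⟩ : ∃ k', k = k' + 1 := ⟨k - 1, by omega⟩
    have hi0 : i ≠ 0 := by
      intro h; rw [h] at him; simp at him
    rw [hPsucc, modal_mul_row (hW (k' + 1)) i hi0]
    have hval : (i : ℕ) - 1 = m := by omega
    rcases Nat.eq_zero_or_pos m with hm | hm
    · subst hm
      have : (⟨(i : ℕ) - 1, lt_of_le_of_lt (Nat.sub_le _ _) i.isLt⟩ :
          Fin (τ + 1)) = 0 := Fin.ext (by simpa using hval)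
      rw [this]
      have harg : k' + 1 - (0 + 1) = k' + 1 - 1 := by omega
      have him1 : (i : ℕ) = 1 := by omega
      rw [show k' + 1 - (0 + 1) = k' from by omega]
    · have := ih hm (⟨(i : ℕ) - 1, lt_of_le_of_lt (Nat.sub_le _ _) i.isLt⟩) hval k' (by omega)
      rw [this, show k' + 1 - (m + 1) = k' - m from by omega]
end

section
/- Let (W^(0), W^(1), W^(2), …) be a sequence of F-modal matrices and define the products P(k) = W^(k)·W^(k−1)···W^(1)·W^(0). If P(k) converges (entrywise) to a limit matrix L as k → ∞, then all block rows of L are identical: for every i with 0 ≤ i ≤ τ and every j with 0 ≤ j ≤ τ, the block L_{ij} equals L_{0j}. -/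
set_option maxHeartbeats 1000000 in
/-- if the products `P(k) = W^(k) ⋯ W^(0)` of F-modal matrices
converge entrywise to a limit `L`, then all block rows of `L` are identical:
`L_{ij} = L_{0j}` for all `i, j`. -/
theorem modal_product_limit_block_rows_identical {n τ : ℕ}
    (F : Matrix (Fin n) (Fin n) ℝ)
    (W : ℕ → Matrix (Fin (τ + 1) × Fin n) (Fin (τ + 1) × Fin n) ℝ)
    (hW : ∀ k, IsModal F (W k))
    (P : ℕ → Matrix (Fin (τ + 1) × Fin n) (Fin (τ + 1) × Fin n) ℝ)
    (hP0 : P 0 = W 0)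
    (hPsucc : ∀ k, P (k + 1) = W (k + 1) * P k)
    (L : Matrix (Fin (τ + 1) × Fin n) (Fin (τ + 1) × Fin n) ℝ)
    (hL : ∀ x y, Filter.Tendsto (fun k => P k x y) Filter.atTop (nhds (L x y)))
    (i j : Fin (τ + 1)) (a b : Fin n) :
    L (i, a) (j, b) = L (0, a) (j, b) := by
  -- step: for i ≠ 0, row (i,a) of P (k+1) is row (i-1,a) of P k
  have step : ∀ (k : ℕ) (i : Fin (τ + 1)), i ≠ 0 → ∀ (a : Fin n)
      (y : Fin (τ + 1) × Fin n),
      P (k + 1) (i, a) y =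
        P k (⟨(i : ℕ) - 1, lt_of_le_of_lt (Nat.sub_le _ _) i.isLt⟩, a) y := by
    intro k i hi a y
    rw [hPsucc, Matrix.mul_apply]
    rw [Fintype.sum_prod_type]
    have hmod := (hW (k + 1)).2.2.2 i hi
    calc ∑ r : Fin (τ + 1), ∑ c : Fin n, W (k + 1) (i, a) (r, c) * P k (r, c) y
        = ∑ r : Fin (τ + 1), ∑ c : Fin n,
            (if r = (⟨(i : ℕ) - 1, lt_of_le_of_lt (Nat.sub_le _ _) i.isLt⟩ : Fin (τ + 1)) ∧ c = a
              then 1 else 0) * P k (r, c) y := by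
          refine Finset.sum_congr rfl fun r _ => Finset.sum_congr rfl fun c _ => ?_
          rw [hmod r a c]
          congr 1
          simp [Fin.ext_iff, eq_comm, and_comm]
      _ = _ := by
          simp [Finset.sum_ite_eq', Finset.sum_ite_eq, ite_and]
  -- iterate: P (k + i) row (i,a) = P k row (0,a)
  have iter : ∀ (m : ℕ) (i : Fin (τ + 1)), (i : ℕ) = m → ∀ (k : ℕ)
      (y : Fin (τ + 1) × Fin n), P (k + m) (i, a) y = P k (0, a) y := by
    intro m
    induction m with
    | zero =>
        intro i hi k y
        have : i = 0 := Fin.ext (by simpa using hi)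
        simp [this]
    | succ m ih =>
        intro i hi k y
        have hi0 : i ≠ 0 := by
          intro h; rw [h] at hi; simp at hi
        have hs : P (k + (m + 1)) (i, a) y =
            P (k + m) (⟨(i : ℕ) - 1, lt_of_le_of_lt (Nat.sub_le _ _) i.isLt⟩, a) y := by
          have := step (k + m) i hi0 a y
          simpa [Nat.add_assoc] using this
        rw [hs, ih _ (by simp [hi])]
  -- the shifted sequence converges to both limits
  have h1 : Filter.Tendsto (fun k => P (k + (i : ℕ)) (i, a) (j, b))
      Filter.atTop (nhds (L (i, a) (j, b))) :=
    (hL (i, a) (j, b)).comp (Filter.tendsto_add_atTop_nat (i : ℕ))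
  have h2 : Filter.Tendsto (fun k => P (k + (i : ℕ)) (i, a) (j, b))
      Filter.atTop (nhds (L (0, a) (j, b))) := by
    have he : (fun k => P (k + (i : ℕ)) (i, a) (j, b)) =
        fun k => P k (0, a) (j, b) := by
      funext k; exact iter (i : ℕ) i rfl k (j, b)
    rw [he]; exact hL (0, a) (j, b)
  exact tendsto_nhds_unique h1 h2
end

section
/- Let F be an n×n row-stochastic real matrix, let (W^(0), W^(1), W^(2), …) be a sequence of F-modal matrices, and define the products P(k) = W^(k)·W^(k−1)···W^(1)·W^(0). If P(k) converges (entrywise) to a limit matrix L as k → ∞, and B_j denotes the block L_{0j} of the top block row of L (0 ≤ j ≤ τ), then F·B_j = B_j for every j. -/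
/-- if `F` is row-stochastic and the products
`P(k) = W^(k) ⋯ W^(0)` of F-modal matrices converge entrywise to `L`, then
each top block `B_j = L_{0j}` satisfies `F · B_j = B_j`. -/
theorem modal_product_limit_top_blocks_fixed_by_F {n τ : ℕ}
    (F : Matrix (Fin n) (Fin n) ℝ)
    (hFnonneg : ∀ i j, 0 ≤ F i j) (hFsum : ∀ i, ∑ j, F i j = 1)
    (W : ℕ → Matrix (Fin (τ + 1) × Fin n) (Fin (τ + 1) × Fin n) ℝ)
    (hW : ∀ k, IsModal F (W k))
    (P : ℕ → Matrix (Fin (τ + 1) × Fin n) (Fin (τ + 1) × Fin n) ℝ)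
    (hP0 : P 0 = W 0)
    (hPsucc : ∀ k, P (k + 1) = W (k + 1) * P k)
    (L : Matrix (Fin (τ + 1) × Fin n) (Fin (τ + 1) × Fin n) ℝ)
    (hL : ∀ x y, Filter.Tendsto (fun k => P k x y) Filter.atTop (nhds (L x y)))
    (B : Fin (τ + 1) → Matrix (Fin n) (Fin n) ℝ)
    (hB : ∀ j a b, B j a b = L (0, a) (j, b)) :
    ∀ j, F * B j = B j := by
  -- shift lemma: block rows below the top just copy the previous product
  have shift : ∀ (k m : ℕ) (h : m + 1 < τ + 1) (a : Fin n)
      (y : Fin (τ + 1) × Fin n),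
      P (k + 1) (⟨m + 1, h⟩, a) y = P k (⟨m, Nat.lt_of_succ_lt h⟩, a) y := by
    intro k m h a y
    rw [hPsucc, Matrix.mul_apply]
    have hne : (⟨m + 1, h⟩ : Fin (τ + 1)) ≠ 0 := by
      simp [Fin.ext_iff]
    rw [Finset.sum_eq_single ((⟨m, Nat.lt_of_succ_lt h⟩ : Fin (τ + 1)), a)]
    · rw [(hW (k + 1)).2.2.2 _ hne]
      simp
    · intro x _ hx
      obtain ⟨x1, x2⟩ := x
      rw [(hW (k + 1)).2.2.2 _ hne]
      have hcond : ¬(((x1 : ℕ) = ((⟨m + 1, h⟩ : Fin (τ + 1)) : ℕ) - 1) ∧ a = x2) := by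
        rintro ⟨h1, h2⟩
        apply hx
        subst h2
        simp only [Nat.add_sub_cancel] at h1
        congr 1
        exact Fin.ext (by simpa using h1)
      rw [if_neg hcond, zero_mul]
    · intro hmem; exact absurd (Finset.mem_univ _) hmem
  have key : ∀ (m : ℕ) (h : m < τ + 1) (k : ℕ) (a : Fin n)
      (y : Fin (τ + 1) × Fin n),
      P (k + m) (⟨m, h⟩, a) y = P k (0, a) y := by
    intro m
    induction m with
    | zero => intro h k a y; rfl
    | succ m ih =>
      intro h k a y
      have hkm : k + (m + 1) = (k + m) + 1 := by ring
      rw [hkm, shift (k + m) m h a y, ih (Nat.lt_of_succ_lt h) k a y]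
  have hLrow : ∀ (i : Fin (τ + 1)) (a : Fin n) (y : Fin (τ + 1) × Fin n),
      L (i, a) y = L (0, a) y := by
    rintro ⟨m, h⟩ a y
    have h1 : Filter.Tendsto (fun k => P (k + m) (⟨m, h⟩, a) y) Filter.atTop
        (nhds (L (⟨m, h⟩, a) y)) :=
      (hL _ _).comp (Filter.tendsto_add_atTop_nat m)
    have h2 : Filter.Tendsto (fun k => P (k + m) (⟨m, h⟩, a) y) Filter.atTop
        (nhds (L (0, a) y)) := by
      simpa only [key m h] using hL (0, a) y
    exact tendsto_nhds_unique h1 h2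
  -- entries of the top block row of W are in [0,1]
  have hWle : ∀ (k : ℕ) (a : Fin n) (x : Fin (τ + 1) × Fin n),
      W k (0, a) x ≤ 1 := by
    rintro k a ⟨r, c⟩
    calc W k (0, a) (r, c) ≤ ∑ r' : Fin (τ + 1), W k (0, a) (r', c) :=
          Finset.single_le_sum (fun i _ => (hW k).1 i a c) (Finset.mem_univ r)
      _ = F a c := (hW k).2.1 a c
      _ ≤ ∑ c', F a c' :=
          Finset.single_le_sum (fun i _ => hFnonneg a i) (Finset.mem_univ c)
      _ = 1 := hFsum a
  intro j
  ext a b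
  rw [Matrix.mul_apply]
  set c0 : ℝ := ∑ c, F a c * B j c b with hc0
  have hg1 : Filter.Tendsto (fun k => P (k + 1) (0, a) (j, b)) Filter.atTop
      (nhds (L (0, a) (j, b))) :=
    (hL _ _).comp (Filter.tendsto_add_atTop_nat 1)
  have hg2 : Filter.Tendsto (fun k => P (k + 1) (0, a) (j, b)) Filter.atTop
      (nhds c0) := by
    have hdiff : Filter.Tendsto
        (fun k => P (k + 1) (0, a) (j, b) - c0) Filter.atTop (nhds 0) := by
      refine squeeze_zero_norm (a := fun k =>
          ∑ x : Fin (τ + 1) × Fin n, |P k x (j, b) - L x (j, b)|) ?_ ?_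
      · intro k
        have hexp : P (k + 1) (0, a) (j, b) - c0 =
            ∑ x : Fin (τ + 1) × Fin n,
              W (k + 1) (0, a) x * (P k x (j, b) - L x (j, b)) := by
          rw [hPsucc, Matrix.mul_apply, hc0]
          have hc0' : (∑ c, F a c * B j c b) =
              ∑ x : Fin (τ + 1) × Fin n, W (k + 1) (0, a) x * L x (j, b) := by
            rw [Fintype.sum_prod_type_right]
            apply Finset.sum_congr rfl
            intro c _
            rw [← (hW (k + 1)).2.1 a c, Finset.sum_mul]
            apply Finset.sum_congr rfl
            intro r _
            rw [hLrow r c (j, b), hB]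
          rw [hc0', ← Finset.sum_sub_distrib]
          apply Finset.sum_congr rfl
          intro x _
          ring
        rw [hexp, Real.norm_eq_abs]
        refine (Finset.abs_sum_le_sum_abs _ _).trans ?_
        apply Finset.sum_le_sum
        intro x _
        rw [abs_mul]
        have h1 : |W (k + 1) (0, a) x| ≤ 1 := by
          rw [abs_of_nonneg]
          · exact hWle (k + 1) a x
          · obtain ⟨r, c⟩ := x; exact (hW (k + 1)).1 r a c
        calc |W (k + 1) (0, a) x| * |P k x (j, b) - L x (j, b)|
            ≤ 1 * |P k x (j, b) - L x (j, b)| :=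
              mul_le_mul_of_nonneg_right h1 (abs_nonneg _)
          _ = |P k x (j, b) - L x (j, b)| := one_mul _
      · have : ∀ x : Fin (τ + 1) × Fin n,
            Filter.Tendsto (fun k => |P k x (j, b) - L x (j, b)|)
              Filter.atTop (nhds 0) := by
          intro x
          have := ((hL x (j, b)).sub (tendsto_const_nhds (x := L x (j, b)))).abs
          simpa using this
        have hsum := tendsto_finset_sum Finset.univ (fun x _ => this x)
        simpa using hsum
    have := hdiff.add (tendsto_const_nhds (x := c0))
    simpa using this
  have hEq : L (0, a) (j, b) = c0 := tendsto_nhds_unique hg1 hg2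
  rw [← hB j a b] at hEq
  rw [hc0] at hEq
  exact hEq.symm
end

section
/- Let Y be an l×l real matrix all of whose entries are nonnegative and each of whose row sums is at most 1. If det(I_l − Y) ≠ 0, then every complex eigenvalue λ of Y satisfies |λ| < 1. -/
/-!
If `Y v = λ v` with `v ≠ 0` and `|λ| ≥ 1`, the triangle inequality gives `|v| ≤ Y |v|`
componentwise. At an index `i` where `|v_i|` is maximal, this forces row `i` of `Y` to sum
to `1` and to vanish outside the set `S` of maximizing indices. So `I - Y` is block
triangular with respect to `S`, and its `S × S` block has zero row sums, hence `det (I - Y) = 0`.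
-/

open Finset
open scoped Matrix

namespace Matrix

variable {ι : Type*} [Fintype ι]

theorem exists_mulVec_eq_smul_of_isRoot_charpoly [DecidableEq ι] {R : Type*} [CommRing R]
    [IsDomain R] {A : Matrix ι ι R} {μ : R} (hμ : A.charpoly.IsRoot μ) :
    ∃ v ≠ 0, A *ᵥ v = μ • v := by
  rw [Polynomial.IsRoot, eval_charpoly, ← exists_mulVec_eq_zero_iff] at hμ
  obtain ⟨v, hv, hker⟩ := hμ
  refine ⟨v, hv, (sub_eq_zero.mp ?_).symm⟩
  rwa [sub_mulVec, scalar_apply, ← smul_one_eq_diagonal, smul_mulVec, one_mulVec] at hker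

theorem det_eq_zero_of_block_sum_row_eq_zero [DecidableEq ι] {R : Type*} [CommRing R]
    [IsDomain R] (A : Matrix ι ι R) (p : ι → Prop) [DecidablePred p]
    (hblock : ∀ i, p i → ∀ j, ¬p j → A i j = 0) (hrow : ∀ i, p i → ∑ j, A i j = 0)
    {i₀ : ι} (hi₀ : p i₀) : A.det = 0 := by
  have : Nonempty {i // p i} := ⟨⟨i₀, hi₀⟩⟩
  have hsub : (A.toSquareBlockProp p).det = 0 := by
    refine exists_mulVec_eq_zero_iff.mp ⟨1, one_ne_zero, funext fun ⟨i, hi⟩ => ?_⟩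
    simp only [mulVec, dotProduct, Pi.one_apply, mul_one, Pi.zero_apply]
    rw [← hrow i hi, ← Fintype.sum_subtype_add_sum_subtype p (A i),
      Fintype.sum_eq_zero (fun j : {j // ¬p j} => A i j) fun j => hblock i hi j j.2, add_zero]
    rfl
  rw [twoBlockTriangular_det' A p hblock, hsub, zero_mul]

section OrderedField

variable {K : Type*} [Field K] [LinearOrder K] [IsStrictOrderedRing K] {Y : Matrix ι ι K}

theorem sum_row_eq_one_and_apply_eq_zero_of_le_mulVec_of_isMax (hY : ∀ i j, 0 ≤ Y i j)
    (hrow : ∀ i, ∑ j, Y i j ≤ 1) {x : ι → K} (hle : x ≤ Y *ᵥ x) {i : ι}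
    (hmax : ∀ j, x j ≤ x i) (hpos : 0 < x i) :
    ∑ j, Y i j = 1 ∧ ∀ j, x j ≠ x i → Y i j = 0 := by
  have hterm : ∀ j ∈ univ, Y i j * x j ≤ Y i j * x i := fun j _ =>
    mul_le_mul_of_nonneg_left (hmax j) (hY i j)
  have hchain : x i ≤ ∑ j, Y i j * x j ∧ ∑ j, Y i j * x j ≤ (∑ j, Y i j) * x i ∧
      (∑ j, Y i j) * x i ≤ x i :=
    ⟨hle i, sum_mul univ (Y i) (x i) ▸ sum_le_sum hterm,
      mul_le_of_le_one_left hpos.le (hrow i)⟩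
  refine ⟨?_, fun j hj => ?_⟩
  · exact mul_left_eq_self₀.mp (by linarith) |>.resolve_right hpos.ne'
  · have heq := (sum_eq_sum_iff_of_le hterm).mp (by rw [← sum_mul]; linarith) j (mem_univ j)
    exact (mul_eq_mul_left_iff.mp heq).resolve_left hj

theorem det_one_sub_eq_zero_of_le_mulVec [DecidableEq ι] (hY : ∀ i j, 0 ≤ Y i j)
    (hrow : ∀ i, ∑ j, Y i j ≤ 1) {x : ι → K} (hle : x ≤ Y *ᵥ x) (hpos : ∃ i, 0 < x i) :
    (1 - Y).det = 0 := by
  obtain ⟨k, hk⟩ := hpos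
  obtain ⟨i₀, -, hmax⟩ := exists_max_image univ x ⟨k, mem_univ k⟩
  have hrow_max : ∀ i, x i = x i₀ → ∑ j, Y i j = 1 ∧ ∀ j, x j ≠ x i → Y i j = 0 :=
    fun i hi => sum_row_eq_one_and_apply_eq_zero_of_le_mulVec_of_isMax hY hrow hle
      (fun j => hi ▸ hmax j (mem_univ j)) (hi ▸ hk.trans_le (hmax k (mem_univ k)))
  refine det_eq_zero_of_block_sum_row_eq_zero (1 - Y) (fun i => x i = x i₀)
    (fun i hi j hj => ?_) (fun i hi => ?_) rfl
  · rw [sub_apply, one_apply_ne (by rintro rfl; exact hj hi), (hrow_max i hi).2 j (hi ▸ hj),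
      sub_zero]
  · simp only [sub_apply, sum_sub_distrib, (hrow_max i hi).1, one_apply, sum_ite_eq, mem_univ,
      if_true, sub_self]

end OrderedField

theorem norm_map_ofReal_mulVec_le {Y : Matrix ι ι ℝ} (hY : ∀ i j, 0 ≤ Y i j) (v : ι → ℂ)
    (i : ι) : ‖(Y.map Complex.ofReal *ᵥ v) i‖ ≤ (Y *ᵥ fun j => ‖v j‖) i :=
  calc ‖(Y.map Complex.ofReal *ᵥ v) i‖ ≤ ∑ j, ‖(Y i j : ℂ) * v j‖ := norm_sum_le _ _
    _ = (Y *ᵥ fun j => ‖v j‖) i := by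
      simp only [mulVec, dotProduct, norm_mul, Complex.norm_real, Real.norm_of_nonneg (hY i _)]

end Matrix

/-- if `Y` is an `l × l` real matrix with nonnegative entries and
row sums at most 1, and `det (I_l - Y) ≠ 0`, then every complex eigenvalue `λ`
of `Y` (root of the characteristic polynomial of `Y` over `ℂ`) satisfies
`|λ| < 1`. -/
theorem substochastic_spectral_radius_lt_one {l : ℕ}
    (Y : Matrix (Fin l) (Fin l) ℝ)
    (hnonneg : ∀ i j, 0 ≤ Y i j)
    (hsum : ∀ i, ∑ j, Y i j ≤ 1)
    (hdet : ((1 : Matrix (Fin l) (Fin l) ℝ) - Y).det ≠ 0) :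
    ∀ lam : ℂ, (Y.map Complex.ofReal).charpoly.IsRoot lam → ‖lam‖ < 1 := by
  intro lam hroot
  by_contra! hlam
  obtain ⟨v, hv0, hv⟩ := Matrix.exists_mulVec_eq_smul_of_isRoot_charpoly hroot
  obtain ⟨k, hk⟩ := Function.ne_iff.mp hv0
  refine hdet (Matrix.det_one_sub_eq_zero_of_le_mulVec hnonneg hsum (x := fun i => ‖v i‖)
    (fun i => ?_) ⟨k, norm_pos_iff.mpr hk⟩)
  calc ‖v i‖ ≤ ‖lam‖ * ‖v i‖ := le_mul_of_one_le_left (norm_nonneg _) hlam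
    _ = ‖(Y.map Complex.ofReal *ᵥ v) i‖ := by rw [hv, Pi.smul_apply, smul_eq_mul, norm_mul]
    _ ≤ (Y *ᵥ fun j => ‖v j‖) i := Matrix.norm_map_ofReal_mulVec_le hnonneg v i
end

section
/- Let Y be an l×l real matrix all of whose entries are nonnegative and each of whose row sums is at most 1, and suppose det(I_l − Y) ≠ 0. Then Y^k converges entrywise to the zero matrix as k → ∞, and the partial sums ∑_{j=0}^{k−1} Y^j converge entrywise to (I_l − Y)^{-1} as k → ∞. -/
/-- if `Y` is an `l × l` real matrix with nonnegative entries,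
row sums at most 1, and `det (I_l - Y) ≠ 0`, then `Y^k → 0` entrywise and the
partial sums `∑_{j=0}^{k-1} Y^j` converge entrywise to `(I_l - Y)⁻¹`. -/
theorem substochastic_pow_tendsto_zero_and_geom_sum {l : ℕ}
    (Y : Matrix (Fin l) (Fin l) ℝ)
    (hnonneg : ∀ i j, 0 ≤ Y i j)
    (hsum : ∀ i, ∑ j, Y i j ≤ 1)
    (hdet : ((1 : Matrix (Fin l) (Fin l) ℝ) - Y).det ≠ 0) :
    (∀ i j, Filter.Tendsto (fun k => (Y ^ k) i j) Filter.atTop (nhds 0)) ∧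
    (∀ i j, Filter.Tendsto (fun k => (∑ r ∈ Finset.range k, Y ^ r) i j)
      Filter.atTop (nhds ((((1 : Matrix (Fin l) (Fin l) ℝ) - Y)⁻¹) i j))) := by
  classical
  set B := ((1 : Matrix (Fin l) (Fin l) ℝ) - Y)⁻¹ with hB
  have hunit : IsUnit ((1 : Matrix (Fin l) (Fin l) ℝ) - Y).det :=
    isUnit_iff_ne_zero.mpr hdet
  -- powers have nonnegative entries and row sums at most 1
  have hpow : ∀ k : ℕ, (∀ i j, 0 ≤ (Y ^ k) i j) ∧ (∀ i, ∑ j, (Y ^ k) i j ≤ 1) := by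
    intro k
    induction k with
    | zero =>
      refine ⟨fun i j => ?_, fun i => ?_⟩
      · rw [pow_zero, Matrix.one_apply]
        split <;> norm_num
      · simp [Matrix.one_apply]
    | succ k ih =>
      refine ⟨fun i j => ?_, fun i => ?_⟩
      · rw [pow_succ, Matrix.mul_apply]
        exact Finset.sum_nonneg fun m _ => mul_nonneg (ih.1 i m) (hnonneg m j)
      · calc ∑ j, (Y ^ (k + 1)) i j
            = ∑ m, (Y ^ k) i m * ∑ j, Y m j := by
              simp only [pow_succ, Matrix.mul_apply]
              rw [Finset.sum_comm]
              simp only [← Finset.mul_sum]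
          _ ≤ ∑ m, (Y ^ k) i m * 1 := Finset.sum_le_sum fun m _ =>
              mul_le_mul_of_nonneg_left (hsum m) (ih.1 i m)
          _ ≤ 1 := by simpa using ih.2 i
  have hle1 : ∀ k i j, (Y ^ k) i j ≤ 1 := fun k i j =>
    le_trans (Finset.single_le_sum (fun m _ => (hpow k).1 i m) (Finset.mem_univ j))
      ((hpow k).2 i)
  -- geometric sum identity
  have hS : ∀ k, (∑ r ∈ Finset.range k, Y ^ r) = (1 - Y ^ k) * B := by
    intro k
    have h1 : (∑ r ∈ Finset.range k, Y ^ r) * (1 - Y) = 1 - Y ^ k := by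
      calc (∑ r ∈ Finset.range k, Y ^ r) * (1 - Y)
          = -((∑ r ∈ Finset.range k, Y ^ r) * (Y - 1)) := by
            rw [← mul_neg, neg_sub]
        _ = -(Y ^ k - 1) := by rw [geom_sum_mul]
        _ = 1 - Y ^ k := neg_sub _ _
    calc (∑ r ∈ Finset.range k, Y ^ r)
        = (∑ r ∈ Finset.range k, Y ^ r) * ((1 - Y) * B) := by
          rw [hB, Matrix.mul_nonsing_inv _ hunit, mul_one]
      _ = ((∑ r ∈ Finset.range k, Y ^ r) * (1 - Y)) * B := by rw [mul_assoc]
      _ = (1 - Y ^ k) * B := by rw [h1]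
  have habs : ∀ k i m, |((1 : Matrix (Fin l) (Fin l) ℝ) - Y ^ k) i m| ≤ 1 := by
    intro k i m
    have h0 := (hpow k).1 i m
    have h1 := hle1 k i m
    rw [Matrix.sub_apply]
    rcases eq_or_ne i m with rfl | h
    · rw [Matrix.one_apply_eq, abs_le]
      constructor <;> linarith
    · rw [Matrix.one_apply_ne h, abs_le]
      constructor <;> linarith
  have hstep : ∀ k i j, (∑ r ∈ Finset.range (k + 1), Y ^ r) i j
      = (∑ r ∈ Finset.range k, Y ^ r) i j + (Y ^ k) i j := by
    intro k i j
    rw [Finset.sum_range_succ, Matrix.add_apply]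
  have hmono : ∀ i j, Monotone fun k => (∑ r ∈ Finset.range k, Y ^ r) i j := by
    intro i j
    apply monotone_nat_of_le_succ
    intro k
    rw [hstep k i j]
    have := (hpow k).1 i j
    linarith
  have hbdd : ∀ i j, BddAbove (Set.range fun k => (∑ r ∈ Finset.range k, Y ^ r) i j) := by
    intro i j
    refine ⟨∑ m, |B m j|, ?_⟩
    rintro x ⟨k, rfl⟩
    show (∑ r ∈ Finset.range k, Y ^ r) i j ≤ _
    rw [hS k, Matrix.mul_apply]
    refine Finset.sum_le_sum fun m _ => ?_
    calc ((1 - Y ^ k) i m) * B m j ≤ |((1 - Y ^ k) i m) * B m j| := le_abs_self _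
      _ = |(1 - Y ^ k) i m| * |B m j| := abs_mul _ _
      _ ≤ 1 * |B m j| := mul_le_mul_of_nonneg_right (habs k i m) (abs_nonneg _)
      _ = |B m j| := one_mul _
  have hconv : ∀ i j, Filter.Tendsto (fun k => (∑ r ∈ Finset.range k, Y ^ r) i j)
      Filter.atTop (nhds (⨆ k, (∑ r ∈ Finset.range k, Y ^ r) i j)) :=
    fun i j => tendsto_atTop_ciSup (hmono i j) (hbdd i j)
  have hzero : ∀ i j, Filter.Tendsto (fun k => (Y ^ k) i j) Filter.atTop (nhds 0) := by
    intro i j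
    have h := ((hconv i j).comp (Filter.tendsto_add_atTop_nat 1)).sub (hconv i j)
    rw [sub_self] at h
    refine h.congr fun k => ?_
    simp only [Function.comp_apply]
    rw [hstep k i j]
    ring
  refine ⟨hzero, fun i j => ?_⟩
  have hterm : ∀ m : Fin l, Filter.Tendsto
      (fun k => ((1 : Matrix (Fin l) (Fin l) ℝ) - Y ^ k) i m * B m j) Filter.atTop
      (nhds ((1 : Matrix (Fin l) (Fin l) ℝ) i m * B m j)) := by
    intro m
    have h : Filter.Tendsto
        (fun k => ((1 : Matrix (Fin l) (Fin l) ℝ) i m - (Y ^ k) i m)) Filter.atTop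
        (nhds ((1 : Matrix (Fin l) (Fin l) ℝ) i m - 0)) :=
      tendsto_const_nhds.sub (hzero i m)
    simpa [Matrix.sub_apply] using h.mul_const (B m j)
  have hsum2 := tendsto_finset_sum Finset.univ fun m (_ : m ∈ Finset.univ) => hterm m
  have hone : (∑ m, (1 : Matrix (Fin l) (Fin l) ℝ) i m * B m j) = B i j := by
    rw [← Matrix.mul_apply, Matrix.one_mul]
  rw [hone] at hsum2
  refine hsum2.congr fun k => ?_
  rw [hS k, Matrix.mul_apply]
end

section
/- Let m, l ∈ ℕ, let X be an l×m real matrix and Y an l×l real matrix, both with all entries nonnegative, and suppose that each row of the l×(m+l) matrix [X Y] sums to 1. Let F be the (m+l)×(m+l) block matrix F = [[I_m, 0],[X, Y]], where I_m is the m×m identity, and suppose det(I_l − Y) ≠ 0. Then F^k converges entrywise, as k → ∞, to the matrix F⋆ = [[I_m, 0],[(I_l − Y)^{-1}·X, 0]]. -/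
open Matrix Filter Finset

private lemma pow_nonneg_entries {l : ℕ} {Y : Matrix (Fin l) (Fin l) ℝ}
    (hY : ∀ i j, 0 ≤ Y i j) : ∀ k i j, 0 ≤ (Y ^ k) i j := by
  intro k
  induction k with
  | zero => intro i j; simp [Matrix.one_apply]; positivity
  | succ n ih =>
    intro i j
    rw [pow_succ, Matrix.mul_apply]
    exact Finset.sum_nonneg fun p _ => mul_nonneg (ih i p) (hY p j)

private lemma Ypow_tendsto_zero {l : ℕ} {Y : Matrix (Fin l) (Fin l) ℝ}
    (hY : ∀ i j, 0 ≤ Y i j) (hrow : ∀ i, ∑ j, Y i j ≤ 1)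
    (hdet : ((1 : Matrix (Fin l) (Fin l) ℝ) - Y).det ≠ 0) :
    ∀ i j, Tendsto (fun k => (Y ^ k) i j) atTop (nhds 0) := by
  set v : ℕ → Fin l → ℝ := fun k i => ∑ j, (Y ^ k) i j with hv
  have hvnonneg : ∀ k i, 0 ≤ v k i := fun k i =>
    Finset.sum_nonneg fun j _ => pow_nonneg_entries hY k i j
  have hstep : ∀ k i, v (k + 1) i = ∑ p, (Y ^ k) i p * (∑ j, Y p j) := by
    intro k i
    simp only [hv, pow_succ, Matrix.mul_apply]
    rw [Finset.sum_comm]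
    simp [Finset.mul_sum]
  have hanti : ∀ i, Antitone fun k => v k i := by
    intro i
    apply antitone_nat_of_succ_le
    intro k
    rw [hstep]
    calc ∑ p, (Y ^ k) i p * (∑ j, Y p j)
        ≤ ∑ p, (Y ^ k) i p * 1 :=
          Finset.sum_le_sum fun p _ =>
            mul_le_mul_of_nonneg_left (hrow p) (pow_nonneg_entries hY k i p)
      _ = v k i := by simp [hv]
  -- each coordinate converges to its infimum
  set s : Fin l → ℝ := fun i => ⨅ k, v k i with hs
  have hconv : ∀ i, Tendsto (fun k => v k i) atTop (nhds (s i)) := by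
    intro i
    exact tendsto_atTop_ciInf (hanti i) ⟨0, by rintro x ⟨k, rfl⟩; exact hvnonneg k i⟩
  -- s is a fixed point of Y
  have hfix : ∀ i, ∑ j, Y i j * s j = s i := by
    intro i
    have h1 : Tendsto (fun k => ∑ j, Y i j * v k j) atTop (nhds (∑ j, Y i j * s j)) :=
      tendsto_finset_sum _ fun j _ => (hconv j).const_mul _
    have h2 : (fun k => ∑ j, Y i j * v k j) = fun k => v (k + 1) i := by
      funext k
      simp only [hv, pow_succ', Matrix.mul_apply, Finset.mul_sum]
      rw [Finset.sum_comm]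
    rw [h2] at h1
    have h3 : Tendsto (fun k => v (k + 1) i) atTop (nhds (s i)) :=
      (hconv i).comp (tendsto_add_atTop_nat 1)
    exact tendsto_nhds_unique h1 h3
  have hs0 : s = 0 := by
    have hunit : IsUnit ((1 : Matrix (Fin l) (Fin l) ℝ) - Y) :=
      (Matrix.isUnit_iff_isUnit_det _).2 (isUnit_iff_ne_zero.2 hdet)
    have hinj := Matrix.mulVec_injective_iff_isUnit.2 hunit
    have : ((1 : Matrix (Fin l) (Fin l) ℝ) - Y) *ᵥ s =
        ((1 : Matrix (Fin l) (Fin l) ℝ) - Y) *ᵥ 0 := by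
      funext i
      simp [Matrix.mulVec, dotProduct, sub_mul, Finset.sum_sub_distrib,
        Matrix.one_apply, Finset.sum_ite_eq, hfix i]
    have := hinj this
    simpa using this
  intro i j
  have hle : ∀ k, (Y ^ k) i j ≤ v k i := by
    intro k
    exact Finset.single_le_sum (fun p _ => pow_nonneg_entries hY k i p) (Finset.mem_univ j)
  have hvi : Tendsto (fun k => v k i) atTop (nhds 0) := by
    have := hconv i; rw [hs0] at this; simpa using this
  exact tendsto_of_tendsto_of_tendsto_of_le_of_le tendsto_const_nhds hvi
    (fun k => pow_nonneg_entries hY k i j) hle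

/-- let `X` (l×m) and `Y` (l×l) be nonnegative real matrices
such that each row of `[X Y]` sums to 1, let `F = [[I_m, 0], [X, Y]]`, and
suppose `det (I_l - Y) ≠ 0`. Then `F^k` converges entrywise to
`F⋆ = [[I_m, 0], [(I_l - Y)⁻¹ · X, 0]]`. -/
theorem pow_fromBlocks_tendsto_stationary {m l : ℕ}
    (X : Matrix (Fin l) (Fin m) ℝ) (Y : Matrix (Fin l) (Fin l) ℝ)
    (hXnonneg : ∀ i j, 0 ≤ X i j) (hYnonneg : ∀ i j, 0 ≤ Y i j)
    (hrowsum : ∀ i, (∑ j, X i j) + (∑ j, Y i j) = 1)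
    (hdet : ((1 : Matrix (Fin l) (Fin l) ℝ) - Y).det ≠ 0) :
    ∀ x y, Filter.Tendsto
      (fun k => ((Matrix.fromBlocks (1 : Matrix (Fin m) (Fin m) ℝ) 0 X Y) ^ k) x y)
      Filter.atTop
      (nhds ((Matrix.fromBlocks (1 : Matrix (Fin m) (Fin m) ℝ) 0
        ((((1 : Matrix (Fin l) (Fin l) ℝ) - Y)⁻¹) * X) 0) x y)) := by
  have hrow : ∀ i, ∑ j, Y i j ≤ 1 := by
    intro i
    have := hrowsum i
    nlinarith [Finset.sum_nonneg (fun j (_ : j ∈ Finset.univ) => hXnonneg i j)]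
  have hY0 := Ypow_tendsto_zero hYnonneg hrow hdet
  set S : ℕ → Matrix (Fin l) (Fin l) ℝ := fun k => ∑ i ∈ Finset.range k, Y ^ i with hS
  -- block formula for powers
  have hblock : ∀ k, (Matrix.fromBlocks (1 : Matrix (Fin m) (Fin m) ℝ) 0 X Y) ^ k =
      Matrix.fromBlocks 1 0 (S k * X) (Y ^ k) := by
    intro k
    induction k with
    | zero => simp [hS, Matrix.fromBlocks_one]
    | succ n ih =>
      rw [pow_succ, ih, Matrix.fromBlocks_multiply]
      have hSsucc : S (n + 1) = S n + Y ^ n := by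
        simp [hS, Finset.sum_range_succ]
      rw [hSsucc]
      congr 1 <;> simp [Matrix.add_mul, pow_succ]
  -- S k * X tends to the target
  set C : Matrix (Fin l) (Fin m) ℝ := ((1 : Matrix (Fin l) (Fin l) ℝ) - Y)⁻¹ * X with hC
  have hSX : ∀ k, S k * X = C - Y ^ k * C := by
    intro k
    have hgeo : S k * ((1 : Matrix (Fin l) (Fin l) ℝ) - Y) =
        1 - Y ^ k := by
      have := geom_sum_mul Y k
      have h2 : S k * (Y - 1) = Y ^ k - 1 := this
      have := congrArg Neg.neg h2
      simpa [mul_sub, sub_eq_iff_eq_add, neg_sub] using this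
    have hSk : S k = (1 - Y ^ k) * ((1 : Matrix (Fin l) (Fin l) ℝ) - Y)⁻¹ := by
      have := congrArg (fun M => M * ((1 : Matrix (Fin l) (Fin l) ℝ) - Y)⁻¹) hgeo
      simpa [Matrix.mul_assoc, Matrix.mul_nonsing_inv _ (isUnit_iff_ne_zero.2 hdet)] using this
    rw [hSk, hC]
    simp [Matrix.sub_mul, Matrix.mul_assoc]
  have hSXentry : ∀ i j, Tendsto (fun k => (S k * X) i j) atTop (nhds (C i j)) := by
    intro i j
    have heq : (fun k => (S k * X) i j) = fun k => C i j - ∑ p, (Y ^ k) i p * C p j := by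
      funext k
      rw [hSX k]
      simp [Matrix.sub_apply, Matrix.mul_apply]
    rw [heq]
    have h0 : Tendsto (fun k => ∑ p, (Y ^ k) i p * C p j) atTop (nhds 0) := by
      have : Tendsto (fun k => ∑ p, (Y ^ k) i p * C p j) atTop
          (nhds (∑ p : Fin l, (0 : ℝ) * C p j)) :=
        tendsto_finset_sum _ fun p _ => (hY0 i p).mul_const _
      simpa using this
    simpa using (tendsto_const_nhds (x := C i j)).sub h0
  intro x y
  simp only [hblock]
  rcases x with i | i <;> rcases y with j | j
  · simpa using tendsto_const_nhds
  · simpa using tendsto_const_nhds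
  · simpa using hSXentry i j
  · simpa using hY0 i j
end

section
/- Let n = m + l with m ≥ 1, let X be an l×m real matrix and Y an l×l real matrix, both with all entries nonnegative, such that each row of the l×n matrix [X Y] sums to 1, and suppose det(I_l − Y) ≠ 0. Let F be the n×n block matrix F = [[I_m, 0],[X, Y]] (which is row-stochastic), let F⋆ = [[I_m, 0],[(I_l − Y)^{-1}·X, 0]], and fix τ ∈ ℕ. Let (W^(0), W^(1), W^(2), …) be any sequence of F-modal matrices and define P(k) = W^(k)·W^(k−1)···W^(1)·W^(0). If P(k) converges entrywise to a limit matrix L as k → ∞, then, regarding L as a (τ+1)×(τ+1) array of n×n blocks L_{ij}, one has L_{i0} = F⋆ for every i and L_{ij} = 0 for every i and every j ≥ 1; that is, the asynchronous limit L coincides with the synchronous limit, and in particular is independent of the choice of modal-matrix sequence. -/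
open Filter in
lemma limit_exchange {τ n : ℕ} (A : ℕ → Fin (τ+1) → Fin n → ℝ)
    (hA : ∀ k r b, 0 ≤ A k r b) (y : Fin n → ℝ)
    (hy : ∀ k b, ∑ r, A k r b = y b)
    (f : ℕ → Fin n → ℝ) (F : Fin n → ℝ)
    (hf : ∀ b, Tendsto (fun k => f k b) atTop (nhds (F b))) :
    Tendsto (fun k => ∑ r : Fin (τ+1), ∑ b, A k r b * f (k - (r:ℕ)) b)
      atTop (nhds (∑ b, y b * F b)) := by
  have hAle : ∀ k r b, A k r b ≤ y b := by
    intro k r b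
    calc A k r b ≤ ∑ r, A k r b :=
          Finset.single_le_sum (fun r _ => hA k r b) (Finset.mem_univ r)
      _ = y b := hy k b
  have hD : Tendsto (fun k => ∑ r : Fin (τ+1), ∑ b, y b * |f (k - (r:ℕ)) b - F b|)
      atTop (nhds 0) := by
    have h0 : (0:ℝ) = ∑ _r : Fin (τ+1), ∑ _b : Fin n, 0 := by simp
    rw [h0]
    refine tendsto_finset_sum _ (fun r _ => tendsto_finset_sum _ (fun b _ => ?_))
    have h1 : Tendsto (fun k => f (k - (r:ℕ)) b) atTop (nhds (F b)) :=
      (hf b).comp (tendsto_sub_atTop_nat _)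
    have h2 : Tendsto (fun k => |f (k - (r:ℕ)) b - F b|) atTop (nhds 0) := by
      have := (h1.sub (tendsto_const_nhds (x := F b))).abs
      simpa using this
    simpa using tendsto_const_nhds.mul h2
  have hbound : ∀ k, |(∑ r : Fin (τ+1), ∑ b, A k r b * f (k - (r:ℕ)) b) - ∑ b, y b * F b|
      ≤ ∑ r : Fin (τ+1), ∑ b, y b * |f (k - (r:ℕ)) b - F b| := by
    intro k
    have hT : (∑ b, y b * F b) = ∑ r : Fin (τ+1), ∑ b, A k r b * F b := by
      rw [Finset.sum_comm]
      congr 1; ext b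
      rw [← Finset.sum_mul, hy k b]
    rw [hT, ← Finset.sum_sub_distrib]
    refine (Finset.abs_sum_le_sum_abs _ _).trans (Finset.sum_le_sum fun r _ => ?_)
    rw [← Finset.sum_sub_distrib]
    refine (Finset.abs_sum_le_sum_abs _ _).trans (Finset.sum_le_sum fun b _ => ?_)
    rw [← mul_sub, abs_mul]
    exact mul_le_mul_of_nonneg_right
      (by rw [abs_of_nonneg (hA k r b)]; exact hAle k r b) (abs_nonneg _)
  have hzero : Tendsto (fun k => (∑ r : Fin (τ+1), ∑ b, A k r b * f (k - (r:ℕ)) b)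
      - ∑ b, y b * F b) atTop (nhds 0) := by
    refine squeeze_zero_norm (fun k => ?_) hD
    simpa using hbound k
  have := hzero.add (tendsto_const_nhds (x := ∑ b, y b * F b))
  simpa using this

section Aux
variable {m l τ : ℕ}
  {F : Matrix (Fin m ⊕ Fin l) (Fin m ⊕ Fin l) ℝ}
  {W : ℕ → Matrix (Fin (τ + 1) × (Fin m ⊕ Fin l)) (Fin (τ + 1) × (Fin m ⊕ Fin l)) ℝ}
  {P : ℕ → Matrix (Fin (τ + 1) × (Fin m ⊕ Fin l)) (Fin (τ + 1) × (Fin m ⊕ Fin l)) ℝ}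

/-- predecessor in `Fin (τ+1)` -/
def ipred (i : Fin (τ+1)) : Fin (τ+1) := ⟨(i:ℕ) - 1, Nat.lt_of_le_of_lt (Nat.sub_le _ _) i.2⟩

lemma Wrow_shift (hW : ∀ k, IsModal F (W k)) (k : ℕ) (i : Fin (τ+1)) (hi : i ≠ 0)
    (a : Fin m ⊕ Fin l) (c : Fin (τ+1) × (Fin m ⊕ Fin l)) :
    W k (i, a) c = if c = (ipred i, a) then 1 else 0 := by
  obtain ⟨j, b⟩ := c
  rw [(hW k).2.2.2 i hi j a b]
  have : ((j:ℕ) = (i:ℕ) - 1 ∧ a = b) ↔ ((j, b) = (ipred i, a)) := by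
    rw [Prod.ext_iff, Fin.ext_iff]
    simp [ipred, eq_comm]
  simp only [this]

lemma Wrow_inl (hW : ∀ k, IsModal F (W k))
    (hFl : ∀ (a : Fin m) (b : Fin m ⊕ Fin l), F (Sum.inl a) b = if b = Sum.inl a then 1 else 0)
    (k : ℕ) (a : Fin m) (c : Fin (τ+1) × (Fin m ⊕ Fin l)) :
    W k (0, Sum.inl a) c = if c = (0, Sum.inl a) then 1 else 0 := by
  obtain ⟨r, b⟩ := c
  by_cases hb : b = Sum.inl a
  · subst hb
    have hsum : ∑ r : Fin (τ+1), W k (0, Sum.inl a) (r, Sum.inl a) = 1 := by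
      rw [(hW k).2.1]; simp [hFl]
    have h0 : W k (0, Sum.inl a) (0, Sum.inl a) = 1 := by
      rw [(hW k).2.2.1]; simp [hFl]
    by_cases hr : r = 0
    · subst hr; simpa using h0
    · have : ∑ r ∈ Finset.univ.erase 0, W k (0, Sum.inl a) (r, Sum.inl a) = 0 := by
        have := Finset.add_sum_erase Finset.univ
          (fun r : Fin (τ+1) => W k (0, Sum.inl a) (r, Sum.inl a)) (Finset.mem_univ 0)
        rw [hsum] at this
        linarith [h0, this.symm]
      have hz := (Finset.sum_eq_zero_iff_of_nonneg
        (fun r _ => (hW k).1 r (Sum.inl a) (Sum.inl a))).mp this r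
        (Finset.mem_erase.mpr ⟨hr, Finset.mem_univ r⟩)
      simp [hz, hr, Prod.ext_iff]
  · have hsum : ∑ r : Fin (τ+1), W k (0, Sum.inl a) (r, b) = 0 := by
      rw [(hW k).2.1]; simp [hFl, hb]
    have hz := (Finset.sum_eq_zero_iff_of_nonneg
      (fun r _ => (hW k).1 r (Sum.inl a) b)).mp hsum r (Finset.mem_univ r)
    simp [hz, Prod.ext_iff, hb]

lemma Wnonneg (hW : ∀ k, IsModal F (W k)) (k : ℕ) (s c : Fin (τ+1) × (Fin m ⊕ Fin l)) :
    0 ≤ W k s c := by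
  obtain ⟨i, a⟩ := s
  by_cases hi : i = 0
  · subst hi; exact (hW k).1 c.1 a c.2
  · rw [Wrow_shift hW k i hi a c]
    split <;> norm_num

lemma Pnonneg (hW : ∀ k, IsModal F (W k)) (hP0 : P 0 = W 0)
    (hPsucc : ∀ k, P (k + 1) = W (k + 1) * P k)
    (k : ℕ) (s c : Fin (τ+1) × (Fin m ⊕ Fin l)) : 0 ≤ P k s c := by
  induction k generalizing s c with
  | zero => rw [hP0]; exact Wnonneg hW 0 s c
  | succ k ih =>
    rw [hPsucc, Matrix.mul_apply]
    exact Finset.sum_nonneg fun t _ => mul_nonneg (Wnonneg hW _ s t) (ih t c)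

lemma Pshift (hW : ∀ k, IsModal F (W k))
    (hPsucc : ∀ k, P (k + 1) = W (k + 1) * P k)
    (k : ℕ) (i : Fin (τ+1)) (hi : i ≠ 0) (a : Fin m ⊕ Fin l)
    (c : Fin (τ+1) × (Fin m ⊕ Fin l)) :
    P (k+1) (i, a) c = P k (ipred i, a) c := by
  rw [hPsucc, Matrix.mul_apply]
  rw [Finset.sum_eq_single ((ipred i, a))]
  · rw [Wrow_shift hW _ i hi a]; simp
  · intro t _ ht
    rw [Wrow_shift hW _ i hi a]
    simp [ht]
  · simp

lemma Pshift' (hW : ∀ k, IsModal F (W k))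
    (hPsucc : ∀ k, P (k + 1) = W (k + 1) * P k)
    (k : ℕ) (i : Fin (τ+1)) (hik : (i:ℕ) ≤ k) (a : Fin m ⊕ Fin l)
    (c : Fin (τ+1) × (Fin m ⊕ Fin l)) :
    P k (i, a) c = P (k - (i:ℕ)) (0, a) c := by
  induction k generalizing i with
  | zero =>
    have : i = 0 := by apply Fin.ext; simp only [Fin.val_zero]; omega
    subst this; rfl
  | succ k ih =>
    by_cases hi : i = 0
    · subst hi; rfl
    · have hvi : 1 ≤ (i:ℕ) := by
        rcases Nat.eq_zero_or_pos (i:ℕ) with h | h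
        · exact absurd (Fin.ext h : i = 0) hi
        · exact h
      have hip : ((ipred i : Fin (τ+1)) : ℕ) = (i:ℕ) - 1 := rfl
      rw [Pshift hW hPsucc k i hi a c, ih (ipred i) (by rw [hip]; omega), hip]
      have heq : k - ((i:ℕ)-1) = k+1 - (i:ℕ) := by omega
      rw [heq]

lemma Prow_inl (hW : ∀ k, IsModal F (W k))
    (hFl : ∀ (a : Fin m) (b : Fin m ⊕ Fin l), F (Sum.inl a) b = if b = Sum.inl a then 1 else 0)
    (hP0 : P 0 = W 0) (hPsucc : ∀ k, P (k + 1) = W (k + 1) * P k)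
    (k : ℕ) (a : Fin m) (c : Fin (τ+1) × (Fin m ⊕ Fin l)) :
    P k (0, Sum.inl a) c = if c = (0, Sum.inl a) then 1 else 0 := by
  induction k generalizing c with
  | zero => rw [hP0]; exact Wrow_inl hW hFl 0 a c
  | succ k ih =>
    rw [hPsucc, Matrix.mul_apply]
    rw [Finset.sum_eq_single ((0, Sum.inl a) : Fin (τ+1) × (Fin m ⊕ Fin l))]
    · rw [Wrow_inl hW hFl]; simp [ih]
    · intro t _ ht
      rw [Wrow_inl hW hFl]; simp [ht]
    · simp

/-- weight selecting the transient columns -/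
def tcol (c : Fin (τ+1) × (Fin m ⊕ Fin l)) : ℝ := if c.1 = 0 ∧ c.2.isLeft then 0 else 1

lemma tcol_nonneg (c : Fin (τ+1) × (Fin m ⊕ Fin l)) : 0 ≤ tcol c := by
  unfold tcol; split <;> norm_num

/-- transient mass of a row -/
def tmass (M : Matrix (Fin (τ+1) × (Fin m ⊕ Fin l)) (Fin (τ+1) × (Fin m ⊕ Fin l)) ℝ)
    (a : Fin l) : ℝ := ∑ c, tcol c * M (0, Sum.inr a) c

lemma tsum_inl (hW : ∀ k, IsModal F (W k))
    (hFl : ∀ (a : Fin m) (b : Fin m ⊕ Fin l), F (Sum.inl a) b = if b = Sum.inl a then 1 else 0)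
    (hP0 : P 0 = W 0) (hPsucc : ∀ k, P (k + 1) = W (k + 1) * P k)
    (k : ℕ) (r : Fin (τ+1)) (hrk : (r:ℕ) ≤ k) (b : Fin m) :
    ∑ c, tcol c * P k (r, Sum.inl b) c = 0 := by
  have : ∀ c : Fin (τ+1) × (Fin m ⊕ Fin l), tcol c * P k (r, Sum.inl b) c
      = if c = ((0 : Fin (τ+1)), Sum.inl b) then tcol c else 0 := by
    intro c
    rw [Pshift' hW hPsucc k r hrk _ c, Prow_inl hW hFl hP0 hPsucc]
    split <;> simp
  rw [Finset.sum_congr rfl (fun c _ => this c), Finset.sum_ite_eq']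
  simp [tcol]

lemma tmass_rec (hW : ∀ k, IsModal F (W k))
    (hFl : ∀ (a : Fin m) (b : Fin m ⊕ Fin l), F (Sum.inl a) b = if b = Sum.inl a then 1 else 0)
    (hP0 : P 0 = W 0) (hPsucc : ∀ k, P (k + 1) = W (k + 1) * P k)
    (k : ℕ) (hk : τ ≤ k) (a : Fin l) :
    tmass (P (k+1)) a = ∑ r : Fin (τ+1), ∑ b : Fin l,
      W (k+1) (0, Sum.inr a) (r, Sum.inr b) * tmass (P (k - (r:ℕ))) b := by
  have step : ∀ t, ∑ c, tcol c * (W (k+1) (0, Sum.inr a) t * P k t c)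
      = W (k+1) (0, Sum.inr a) t * ∑ c, tcol c * P k t c := by
    intro t; rw [Finset.mul_sum]; exact Finset.sum_congr rfl (fun c _ => by ring)
  calc tmass (P (k+1)) a
      = ∑ c, tcol c * ∑ t, W (k+1) (0, Sum.inr a) t * P k t c := by
        simp only [tmass, hPsucc k, Matrix.mul_apply]
    _ = ∑ c, ∑ t, tcol c * (W (k+1) (0, Sum.inr a) t * P k t c) := by
        exact Finset.sum_congr rfl (fun c _ => Finset.mul_sum _ _ _)
    _ = ∑ t, ∑ c, tcol c * (W (k+1) (0, Sum.inr a) t * P k t c) := Finset.sum_comm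
    _ = ∑ t, W (k+1) (0, Sum.inr a) t * ∑ c, tcol c * P k t c :=
        Finset.sum_congr rfl (fun t _ => step t)
    _ = ∑ r : Fin (τ+1), ∑ x : Fin m ⊕ Fin l,
          W (k+1) (0, Sum.inr a) (r, x) * ∑ c, tcol c * P k (r, x) c :=
        by rw [Fintype.sum_prod_type]
    _ = ∑ r : Fin (τ+1), ((∑ b : Fin m,
          W (k+1) (0, Sum.inr a) (r, Sum.inl b) * ∑ c, tcol c * P k (r, Sum.inl b) c)
        + ∑ b : Fin l,
          W (k+1) (0, Sum.inr a) (r, Sum.inr b) * ∑ c, tcol c * P k (r, Sum.inr b) c) :=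
        Finset.sum_congr rfl (fun r _ => Fintype.sum_sum_type _)
    _ = ∑ r : Fin (τ+1), ∑ b : Fin l,
          W (k+1) (0, Sum.inr a) (r, Sum.inr b) * tmass (P (k - (r:ℕ))) b := by
        refine Finset.sum_congr rfl (fun r _ => ?_)
        have hrk : (r:ℕ) ≤ k := le_trans (Nat.lt_succ_iff.mp r.2) hk
        rw [Finset.sum_congr rfl (fun b _ => by
          rw [tsum_inl hW hFl hP0 hPsucc k r hrk b, mul_zero]), Finset.sum_const_zero, zero_add]
        refine Finset.sum_congr rfl (fun b _ => ?_)
        congr 1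
        unfold tmass
        exact Finset.sum_congr rfl (fun c _ => by rw [Pshift' hW hPsucc k r hrk _ c])

lemma zP_rec (hW : ∀ k, IsModal F (W k))
    (hFl : ∀ (a : Fin m) (b : Fin m ⊕ Fin l), F (Sum.inl a) b = if b = Sum.inl a then 1 else 0)
    (hP0 : P 0 = W 0) (hPsucc : ∀ k, P (k + 1) = W (k + 1) * P k)
    (k : ℕ) (hk : τ ≤ k) (a : Fin l) (b : Fin m) :
    P (k+1) (0, Sum.inr a) (0, Sum.inl b) = F (Sum.inr a) (Sum.inl b)
      + ∑ r : Fin (τ+1), ∑ c : Fin l,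
        W (k+1) (0, Sum.inr a) (r, Sum.inr c) * P (k - (r:ℕ)) (0, Sum.inr c) (0, Sum.inl b) := by
  calc P (k+1) (0, Sum.inr a) (0, Sum.inl b)
      = ∑ t, W (k+1) (0, Sum.inr a) t * P k t (0, Sum.inl b) := by
        rw [hPsucc, Matrix.mul_apply]
    _ = ∑ r : Fin (τ+1), ∑ x : Fin m ⊕ Fin l,
          W (k+1) (0, Sum.inr a) (r, x) * P k (r, x) (0, Sum.inl b) := by rw [Fintype.sum_prod_type]
    _ = ∑ r : Fin (τ+1), ((∑ c : Fin m,
          W (k+1) (0, Sum.inr a) (r, Sum.inl c) * P k (r, Sum.inl c) (0, Sum.inl b))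
        + ∑ c : Fin l,
          W (k+1) (0, Sum.inr a) (r, Sum.inr c) * P k (r, Sum.inr c) (0, Sum.inl b)) :=
        Finset.sum_congr rfl (fun r _ => Fintype.sum_sum_type _)
    _ = (∑ r : Fin (τ+1), W (k+1) (0, Sum.inr a) (r, Sum.inl b))
        + ∑ r : Fin (τ+1), ∑ c : Fin l,
          W (k+1) (0, Sum.inr a) (r, Sum.inr c) * P (k - (r:ℕ)) (0, Sum.inr c) (0, Sum.inl b) := by
        rw [← Finset.sum_add_distrib]
        refine Finset.sum_congr rfl (fun r _ => ?_)
        have hrk : (r:ℕ) ≤ k := le_trans (Nat.lt_succ_iff.mp r.2) hk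
        congr 1
        · have : ∀ c : Fin m, W (k+1) (0, Sum.inr a) (r, Sum.inl c)
              * P k (r, Sum.inl c) (0, Sum.inl b)
              = if c = b then W (k+1) (0, Sum.inr a) (r, Sum.inl c) else 0 := by
            intro c
            rw [Pshift' hW hPsucc k r hrk _ _, Prow_inl hW hFl hP0 hPsucc]
            by_cases hcb : c = b
            · subst hcb; simp
            · have : ((0 : Fin (τ+1)), (Sum.inl b : Fin m ⊕ Fin l)) ≠ (0, Sum.inl c) := by
                simp [Prod.ext_iff, Ne.symm hcb]
              simp [this, hcb]
          rw [Finset.sum_congr rfl (fun c _ => this c), Finset.sum_ite_eq']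
          simp
        · exact Finset.sum_congr rfl (fun c _ => by
            rw [Pshift' hW hPsucc k r hrk _ _])
    _ = F (Sum.inr a) (Sum.inl b)
        + ∑ r : Fin (τ+1), ∑ c : Fin l,
          W (k+1) (0, Sum.inr a) (r, Sum.inr c) * P (k - (r:ℕ)) (0, Sum.inr c) (0, Sum.inl b) := by
        rw [(hW (k+1)).2.1]

end Aux

open Filter

/-- with `m ≥ 1`, `X` (l×m), `Y` (l×l) nonnegative, rows of
`[X Y]` summing to 1, and `det (I_l - Y) ≠ 0`, let `F = [[I_m, 0], [X, Y]]`
and `F⋆ = [[I_m, 0], [(I_l - Y)⁻¹ · X, 0]]`. For any sequence of F-modal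
matrices with products `P(k) = W^(k) ⋯ W^(0)` converging entrywise to `L`,
the limit `L` has every block `L_{i0} = F⋆` and `L_{ij} = 0` for `j ≥ 1`:
the asynchronous limit coincides with the synchronous one, independently of
the choice of modal-matrix sequence. -/
theorem async_limit_eq_sync_limit {m l τ : ℕ} (hm : 1 ≤ m)
    (X : Matrix (Fin l) (Fin m) ℝ) (Y : Matrix (Fin l) (Fin l) ℝ)
    (hXnonneg : ∀ i j, 0 ≤ X i j) (hYnonneg : ∀ i j, 0 ≤ Y i j)
    (hrowsum : ∀ i, (∑ j, X i j) + (∑ j, Y i j) = 1)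
    (hdet : ((1 : Matrix (Fin l) (Fin l) ℝ) - Y).det ≠ 0)
    (F Fstar : Matrix (Fin m ⊕ Fin l) (Fin m ⊕ Fin l) ℝ)
    (hF : F = Matrix.fromBlocks (1 : Matrix (Fin m) (Fin m) ℝ) 0 X Y)
    (hFstar : Fstar = Matrix.fromBlocks (1 : Matrix (Fin m) (Fin m) ℝ) 0
      ((((1 : Matrix (Fin l) (Fin l) ℝ) - Y)⁻¹) * X) 0)
    (W : ℕ → Matrix (Fin (τ + 1) × (Fin m ⊕ Fin l)) (Fin (τ + 1) × (Fin m ⊕ Fin l)) ℝ)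
    (hW : ∀ k, IsModal F (W k))
    (P : ℕ → Matrix (Fin (τ + 1) × (Fin m ⊕ Fin l)) (Fin (τ + 1) × (Fin m ⊕ Fin l)) ℝ)
    (hP0 : P 0 = W 0)
    (hPsucc : ∀ k, P (k + 1) = W (k + 1) * P k)
    (L : Matrix (Fin (τ + 1) × (Fin m ⊕ Fin l)) (Fin (τ + 1) × (Fin m ⊕ Fin l)) ℝ)
    (hL : ∀ x y, Filter.Tendsto (fun k => P k x y) Filter.atTop (nhds (L x y))) :
    (∀ (i : Fin (τ + 1)) (a b : Fin m ⊕ Fin l), L (i, a) (0, b) = Fstar a b) ∧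
    (∀ (i j : Fin (τ + 1)), j ≠ 0 → ∀ (a b : Fin m ⊕ Fin l), L (i, a) (j, b) = 0) := by
  have hu : IsUnit ((1 : Matrix (Fin l) (Fin l) ℝ) - Y).det := isUnit_iff_ne_zero.mpr hdet
  have hFl : ∀ (a : Fin m) (b : Fin m ⊕ Fin l),
      F (Sum.inl a) b = if b = Sum.inl a then 1 else 0 := by
    intro a b
    cases b with
    | inl b =>
      by_cases hab : b = a
      · subst hab; simp [hF, Matrix.one_apply]
      · simp [hF, Matrix.one_apply, Ne.symm hab, hab]
    | inr b => simp [hF]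
  have hFrl : ∀ (a : Fin l) (b : Fin m), F (Sum.inr a) (Sum.inl b) = X a b := by
    intro a b; simp [hF]
  have hFrr : ∀ (a b : Fin l), F (Sum.inr a) (Sum.inr b) = Y a b := by
    intro a b; simp [hF]
  -- limits of shifted rows
  have hLrow : ∀ (i : Fin (τ+1)) (a : Fin m ⊕ Fin l) (c : Fin (τ+1) × (Fin m ⊕ Fin l)),
      L (i, a) c = L (0, a) c := by
    intro i a c
    have t1 : Tendsto (fun k => P (k + (i:ℕ)) (i, a) c) atTop (nhds (L (i, a) c)) :=
      (hL (i, a) c).comp (tendsto_add_atTop_nat _)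
    have heq : ∀ k, P (k + (i:ℕ)) (i, a) c = P k (0, a) c := by
      intro k
      rw [Pshift' hW hPsucc (k + (i:ℕ)) i (Nat.le_add_left _ _) a c]
      congr 1
      omega
    exact tendsto_nhds_unique (t1.congr heq) (hL (0, a) c)
  have hL0l : ∀ (a : Fin m) (c : Fin (τ+1) × (Fin m ⊕ Fin l)),
      L (0, Sum.inl a) c = if c = (0, Sum.inl a) then 1 else 0 := by
    intro a c
    refine tendsto_nhds_unique (hL _ _) ?_
    exact Tendsto.congr (fun k => (Prow_inl hW hFl hP0 hPsucc k a c).symm) tendsto_const_nhds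
  have hLnn : ∀ s c, 0 ≤ L s c :=
    fun s c => ge_of_tendsto' (hL s c) (fun k => Pnonneg hW hP0 hPsucc k s c)
  -- transient mass vanishes
  have hHrec : ∀ a : Fin l, tmass L a = ∑ b, Y a b * tmass L b := by
    intro a
    have t1 : Tendsto (fun k => tmass (P (k+1)) a) atTop (nhds (tmass L a)) := by
      refine tendsto_finset_sum _ (fun c _ => ?_)
      exact tendsto_const_nhds.mul ((hL _ c).comp (tendsto_add_atTop_nat 1))
    have t2 : Tendsto (fun k => ∑ r : Fin (τ+1), ∑ b : Fin l,
        W (k+1) (0, Sum.inr a) (r, Sum.inr b) * tmass (P (k - (r:ℕ))) b)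
        atTop (nhds (∑ b, Y a b * tmass L b)) := by
      refine limit_exchange (fun k r b => W (k+1) (0, Sum.inr a) (r, Sum.inr b))
        (fun k r b => (hW (k+1)).1 r _ _) (fun b => Y a b)
        (fun k b => by rw [(hW (k+1)).2.1]; exact hFrr a b)
        (fun k b => tmass (P k) b) (fun b => tmass L b) (fun b => ?_)
      exact tendsto_finset_sum _ (fun c _ => tendsto_const_nhds.mul (hL _ c))
    refine tendsto_nhds_unique t1 (t2.congr' ?_)
    filter_upwards [eventually_ge_atTop τ] with k hk
    exact (tmass_rec hW hFl hP0 hPsucc k hk a).symm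
  have hH0 : ∀ a : Fin l, tmass L a = 0 := by
    have hmv : Y.mulVec (fun a => tmass L a) = fun a => tmass L a := by
      funext a
      rw [Matrix.mulVec]
      exact (hHrec a).symm
    have hz : ((1 : Matrix (Fin l) (Fin l) ℝ) - Y).mulVec (fun a => tmass L a) = 0 := by
      rw [Matrix.sub_mulVec, Matrix.one_mulVec, hmv, sub_self]
    have : (fun a => tmass L a) = 0 := by
      calc (fun a => tmass L a)
          = (1 : Matrix (Fin l) (Fin l) ℝ).mulVec (fun a => tmass L a) :=
            (Matrix.one_mulVec _).symm
        _ = ((((1 : Matrix (Fin l) (Fin l) ℝ) - Y)⁻¹) * ((1 : Matrix (Fin l) (Fin l) ℝ) - Y)).mulVec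
              (fun a => tmass L a) := by rw [Matrix.nonsing_inv_mul _ hu]
        _ = (((1 : Matrix (Fin l) (Fin l) ℝ) - Y)⁻¹).mulVec
              (((1 : Matrix (Fin l) (Fin l) ℝ) - Y).mulVec (fun a => tmass L a)) := by
            rw [← Matrix.mulVec_mulVec]
        _ = 0 := by rw [hz, Matrix.mulVec_zero]
    intro a; exact congrFun this a
  have hLtr : ∀ (a : Fin l) (c : Fin (τ+1) × (Fin m ⊕ Fin l)),
      tcol c = 1 → L (0, Sum.inr a) c = 0 := by
    intro a c hc
    have := (Finset.sum_eq_zero_iff_of_nonneg (fun c _ =>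
      mul_nonneg (tcol_nonneg c) (hLnn (0, Sum.inr a) c))).mp (hH0 a) c (Finset.mem_univ c)
    rwa [hc, one_mul] at this
  have htc1 : ∀ (j : Fin (τ+1)) (b : Fin m ⊕ Fin l), j ≠ 0 → tcol ((j, b)) = (1:ℝ) := by
    intro j b hj; simp [tcol, hj]
  have htc2 : ∀ (b : Fin l), tcol ((0, Sum.inr b) : Fin (τ+1) × (Fin m ⊕ Fin l)) = (1:ℝ) := by
    intro b; simp [tcol]
  -- the Z block
  have hZrec : ∀ (a : Fin l) (b : Fin m), L (0, Sum.inr a) (0, Sum.inl b)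
      = X a b + ∑ c, Y a c * L (0, Sum.inr c) (0, Sum.inl b) := by
    intro a b
    have t1 : Tendsto (fun k => P (k+1) (0, Sum.inr a) (0, Sum.inl b))
        atTop (nhds (L (0, Sum.inr a) (0, Sum.inl b))) :=
      (hL _ _).comp (tendsto_add_atTop_nat 1)
    have t2 : Tendsto (fun k => F (Sum.inr a) (Sum.inl b) + ∑ r : Fin (τ+1), ∑ c : Fin l,
        W (k+1) (0, Sum.inr a) (r, Sum.inr c) * P (k - (r:ℕ)) (0, Sum.inr c) (0, Sum.inl b))
        atTop (nhds (X a b + ∑ c, Y a c * L (0, Sum.inr c) (0, Sum.inl b))) := by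
      rw [← hFrl a b]
      refine tendsto_const_nhds.add ?_
      exact limit_exchange (fun k r c => W (k+1) (0, Sum.inr a) (r, Sum.inr c))
        (fun k r c => (hW (k+1)).1 r _ _) (fun c => Y a c)
        (fun k c => by rw [(hW (k+1)).2.1]; exact hFrr a c)
        (fun k c => P k (0, Sum.inr c) (0, Sum.inl b))
        (fun c => L (0, Sum.inr c) (0, Sum.inl b)) (fun c => hL _ _)
    refine tendsto_nhds_unique t1 (t2.congr' ?_)
    filter_upwards [eventually_ge_atTop τ] with k hk
    exact (zP_rec hW hFl hP0 hPsucc k hk a b).symm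
  have hZ : ∀ (a : Fin l) (b : Fin m), L (0, Sum.inr a) (0, Sum.inl b)
      = ((((1 : Matrix (Fin l) (Fin l) ℝ) - Y)⁻¹) * X) a b := by
    have hZm : (Matrix.of fun (a : Fin l) (b : Fin m) => L (0, Sum.inr a) (0, Sum.inl b))
        = X + Y * (Matrix.of fun (a : Fin l) (b : Fin m) => L (0, Sum.inr a) (0, Sum.inl b)) := by
      ext a b
      simp only [Matrix.add_apply, Matrix.mul_apply, Matrix.of_apply]
      exact hZrec a b
    have h1 : ((1 : Matrix (Fin l) (Fin l) ℝ) - Y)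
        * (Matrix.of fun (a : Fin l) (b : Fin m) => L (0, Sum.inr a) (0, Sum.inl b)) = X := by
      rw [Matrix.sub_mul, Matrix.one_mul]
      nth_rewrite 1 [hZm]
      rw [add_sub_cancel_right]
    have h2 : (Matrix.of fun (a : Fin l) (b : Fin m) => L (0, Sum.inr a) (0, Sum.inl b))
        = (((1 : Matrix (Fin l) (Fin l) ℝ) - Y)⁻¹) * X := by
      rw [← h1, ← Matrix.mul_assoc, Matrix.nonsing_inv_mul _ hu, Matrix.one_mul]
    intro a b
    exact congrFun (congrFun h2 a) b
  -- assemble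
  constructor
  · intro i a b
    rw [hLrow i a (0, b)]
    cases a with
    | inl a =>
      rw [hL0l a (0, b), hFstar]
      cases b with
      | inl b =>
        by_cases hab : b = a
        · subst hab; simp [Matrix.one_apply]
        · simp [Matrix.one_apply, hab, Ne.symm hab, Prod.ext_iff]
      | inr b => simp [Prod.ext_iff]
    | inr a =>
      cases b with
      | inl b => rw [hZ a b, hFstar]; simp
      | inr b =>
        rw [hLtr a (0, Sum.inr b) (htc2 b), hFstar]
        simp
  · intro i j hj a b
    rw [hLrow i a (j, b)]
    cases a with
    | inl a =>
      rw [hL0l a (j, b)]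
      simp [Prod.ext_iff, hj]
    | inr a =>
      exact hLtr a (j, b) (htc1 j b hj)
end
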